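/- Let F : ℝⁿ×ℝˡ → ℝᵖ be a C¹ map and m ≥ 1 a real number, and suppose there exist ε, δ > 0 and a neighborhood U of 0 in ℝⁿ×ℝˡ such that κ(ρ(u)^{1−m}·∇_x F(u)) ≥ ε for every u ∈ U with ρ(u)^{1−m}·‖F(u)‖ ≤ δ, where ρ(u) = ‖u‖. Then there exists a constant C₀ > 0 such that for every u = (x,λ) ∈ U with ρ(u)^{1−m}·‖F(u)‖ ≤ δ and u ≠ 0, the Kuo pseudo-distance satisfies d_x∇F(u) = min_{1≤j≤p} ‖N(F,j,u)‖ ≥ C₀·‖u‖^{m−1}; in particular d_x∇F(u) ≥ C₀·‖x‖^{m−1}. -/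

import Mathlib

/-! `N(F,j,u)` is a combination `∑ αᵢ ∇ₓFᵢ(u)` with `αⱼ = 1`, hence `‖α‖ ≥ 1` and
`κ(∇ₓF(u)) ≤ ‖α‖⁻¹ ‖N(F,j,u)‖ ≤ ‖N(F,j,u)‖`. As `κ` is positively homogeneous, the
nondegeneracy hypothesis gives `ε ≤ ρ(u)^{1-m} κ(∇ₓF(u)) ≤ ρ(u)^{1-m} ‖N(F,j,u)‖`, so `C₀ = ε`
works; `‖x‖ ≤ ρ(u)` and `m ≥ 1` give the bound in terms of `‖x‖`. -/

noncomputable section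

/-- The Euclidean norm of `u = (x,λ) ∈ ℝⁿ×ℝˡ`. -/
def rho {n l : ℕ} (u : EuclideanSpace ℝ (Fin n) × EuclideanSpace ℝ (Fin l)) : ℝ :=
  Real.sqrt (‖u.1‖ ^ 2 + ‖u.2‖ ^ 2)

/-- The gradient of the `i`-th component of `F` in the `x`-variables. -/
def gradX {n l p : ℕ} (F : EuclideanSpace ℝ (Fin n) × EuclideanSpace ℝ (Fin l) →
    EuclideanSpace ℝ (Fin p)) (i : Fin p)
    (u : EuclideanSpace ℝ (Fin n) × EuclideanSpace ℝ (Fin l)) : EuclideanSpace ℝ (Fin n) :=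
  WithLp.toLp 2 (fun j => fderiv ℝ F u (EuclideanSpace.single j 1, 0) i)

/-- `N(F,j,u)`: the gradient `∇ₓF_j(u)` minus its orthogonal projection onto the span of
the other gradients. -/
def NK {n l p : ℕ} (F : EuclideanSpace ℝ (Fin n) × EuclideanSpace ℝ (Fin l) →
    EuclideanSpace ℝ (Fin p)) (j : Fin p)
    (u : EuclideanSpace ℝ (Fin n) × EuclideanSpace ℝ (Fin l)) : EuclideanSpace ℝ (Fin n) :=
  gradX F j u - (Submodule.orthogonalProjectionOnto
    (Submodule.span ℝ ((fun i => gradX F i u) '' {i | i ≠ j})) (gradX F j u) :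
      EuclideanSpace ℝ (Fin n))

/-- `κ(A) = inf{‖Aᵀα‖ : α ∈ ℝᵖ, ‖α‖ = 1}` for a real `p×n` matrix. -/
def kappa {p n : ℕ} (A : Matrix (Fin p) (Fin n) ℝ) : ℝ :=
  ⨅ α : {a : EuclideanSpace ℝ (Fin p) // ‖a‖ = 1},
    ‖(show EuclideanSpace ℝ (Fin n) from WithLp.toLp 2 (fun j => ∑ i, (α : EuclideanSpace ℝ (Fin p)) i * A i j))‖


open Submodule Matrix

theorem exists_sum_smul_eq_sub_of_mem_span {R M ι : Type*} [Ring R] [AddCommGroup M]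
    [Module R M] [Fintype ι] [DecidableEq ι] {v : ι → M} {j : ι} {w : M}
    (hw : w ∈ span R (v '' {i | i ≠ j})) :
    ∃ α : ι → R, α j = 1 ∧ ∑ i, α i • v i = v j - w := by
  obtain ⟨l, hl, rfl⟩ := (Finsupp.mem_span_image_iff_linearCombination R).1 hw
  have hlj : l j = 0 := (Finsupp.mem_supported' R l).1 hl j (by simp)
  refine ⟨⇑(Finsupp.single j (1 : R) - l), by simp [hlj], ?_⟩
  rw [← Finsupp.sum_fintype _ (fun i a => a • v i) fun i => zero_smul R (v i),
    ← Finsupp.linearCombination_apply, map_sub, Finsupp.linearCombination_single, one_smul]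

section

variable {p n : ℕ}

theorem kappa_nonneg (A : Matrix (Fin p) (Fin n) ℝ) : 0 ≤ kappa A :=
  Real.iInf_nonneg fun _ => norm_nonneg _

theorem kappa_of_fin_zero (A : Matrix (Fin 0) (Fin n) ℝ) : kappa A = 0 :=
  have : IsEmpty {a : EuclideanSpace ℝ (Fin 0) // ‖a‖ = 1} :=
    ⟨fun a => by simpa [Subsingleton.elim a.1 0] using a.2⟩
  Real.iInf_of_isEmpty _

theorem kappa_smul (c : ℝ) (A : Matrix (Fin p) (Fin n) ℝ) : kappa (c • A) = |c| * kappa A := by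
  rw [kappa, kappa, Real.mul_iInf_of_nonneg (abs_nonneg c)]
  congr 1 with α
  rw [← Real.norm_eq_abs, ← norm_smul]
  congr 1 with k
  simp [Finset.mul_sum, mul_left_comm]

theorem kappa_mul_norm_le (A : Matrix (Fin p) (Fin n) ℝ) (α : EuclideanSpace ℝ (Fin p)) :
    kappa A * ‖α‖ ≤ ‖WithLp.toLp 2 (α.ofLp ᵥ* A)‖ := by
  rcases eq_or_ne α 0 with rfl | hα
  · simp
  have hnorm : ‖‖α‖⁻¹ • α‖ = 1 := by
    rw [norm_smul, norm_inv, norm_norm, inv_mul_cancel₀ (norm_ne_zero_iff.2 hα)]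
  have hle : kappa A ≤ ‖WithLp.toLp 2 ((‖α‖⁻¹ • α).ofLp ᵥ* A)‖ :=
    ciInf_le ⟨0, Set.forall_mem_range.2 fun _ => norm_nonneg _⟩ (⟨_, hnorm⟩ : {a // ‖a‖ = 1})
  rwa [WithLp.ofLp_smul, smul_vecMul, WithLp.toLp_smul, norm_smul, norm_inv, norm_norm,
    inv_mul_eq_div, le_div_iff₀ (norm_pos_iff.2 hα)] at hle

theorem kappa_le_norm_sub_orthogonalProjection (v : Fin p → EuclideanSpace ℝ (Fin n))
    (j : Fin p) :
    kappa (Matrix.of fun i k => v i k) ≤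
      ‖v j - (orthogonalProjectionOnto (span ℝ (v '' {i | i ≠ j})) (v j) :
        EuclideanSpace ℝ (Fin n))‖ := by
  obtain ⟨α, hαj, hα⟩ := exists_sum_smul_eq_sub_of_mem_span (coe_mem
    (orthogonalProjectionOnto (span ℝ (v '' {i | i ≠ j})) (v j)))
  have hα_norm : 1 ≤ ‖WithLp.toLp 2 α‖ := by
    simpa [hαj] using PiLp.norm_apply_le (WithLp.toLp 2 α) j
  have hvecMul : WithLp.toLp 2 (α ᵥ* Matrix.of fun i k => v i k) = ∑ i, α i • v i := by
    ext k
    simp [vecMul, dotProduct]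
  calc kappa _ ≤ kappa _ * ‖WithLp.toLp 2 α‖ := le_mul_of_one_le_right (kappa_nonneg _) hα_norm
    _ ≤ _ := kappa_mul_norm_le _ _
    _ = _ := by rw [hvecMul, hα]

variable {l : ℕ}

theorem rho_eq_norm_toLp (u : EuclideanSpace ℝ (Fin n) × EuclideanSpace ℝ (Fin l)) :
    rho u = ‖WithLp.toLp 2 u‖ :=
  (WithLp.prod_norm_eq_of_L2 _).symm

theorem rho_pos {u : EuclideanSpace ℝ (Fin n) × EuclideanSpace ℝ (Fin l)} (hu : u ≠ 0) :
    0 < rho u := by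
  rw [rho_eq_norm_toLp]
  simpa using hu

theorem norm_fst_le_rho (u : EuclideanSpace ℝ (Fin n) × EuclideanSpace ℝ (Fin l)) :
    ‖u.1‖ ≤ rho u :=
  rho_eq_norm_toLp u ▸ WithLp.norm_fst_le (x := WithLp.toLp 2 u)

end

theorem kuoDist_ge_of_ND_general {n l p : ℕ}
    (F : EuclideanSpace ℝ (Fin n) × EuclideanSpace ℝ (Fin l) → EuclideanSpace ℝ (Fin p))
    (m : ℝ) (hm : 1 ≤ m)
    (ε δ : ℝ) (hε : 0 < ε)
    (U : Set (EuclideanSpace ℝ (Fin n) × EuclideanSpace ℝ (Fin l)))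
    (hND : ∀ u ∈ U, rho u ^ (1 - m) * ‖F u‖ ≤ δ →
      ε ≤ kappa (Matrix.of fun i j =>
        rho u ^ (1 - m) * fderiv ℝ F u (EuclideanSpace.single j 1, 0) i)) :
    ∃ C₀ > (0 : ℝ), ∀ u ∈ U, rho u ^ (1 - m) * ‖F u‖ ≤ δ → u ≠ 0 →
      C₀ * rho u ^ (m - 1) ≤ ⨅ j : Fin p, ‖NK F j u‖ ∧
      C₀ * ‖u.1‖ ^ (m - 1) ≤ ⨅ j : Fin p, ‖NK F j u‖ := by
  refine ⟨ε, hε, fun u hu hFu hu0 => ?_⟩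
  have hρ := rho_pos hu0
  have hκ := hND u hu hFu
  have hA : (Matrix.of fun i j => rho u ^ (1 - m) * fderiv ℝ F u (EuclideanSpace.single j 1, 0) i)
      = rho u ^ (1 - m) • Matrix.of fun i k => gradX F i u k := rfl
  rw [hA, kappa_smul, abs_of_pos (Real.rpow_pos_of_pos hρ _)] at hκ
  obtain _ | p := p
  · exact absurd hκ (by simp [kappa_of_fin_zero, hε])
  have hNK (j : Fin (p + 1)) : ε * rho u ^ (m - 1) ≤ ‖NK F j u‖ :=
    calc ε * rho u ^ (m - 1)
        ≤ rho u ^ (1 - m) * kappa (Matrix.of fun i k => gradX F i u k) * rho u ^ (m - 1) := by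
          gcongr
      _ = kappa (Matrix.of fun i k => gradX F i u k) := by
          rw [mul_right_comm, ← Real.rpow_add hρ, sub_add_sub_cancel', sub_self, Real.rpow_zero,
            one_mul]
      _ ≤ ‖NK F j u‖ := kappa_le_norm_sub_orthogonalProjection (fun i => gradX F i u) j
  have hinf := le_ciInf hNK
  refine ⟨hinf, le_trans ?_ hinf⟩
  gcongr
  exact norm_fst_le_rho u

/-- if `F` is `C¹` and `κ(ρ(u)^{1-m}·∇ₓF(u)) ≥ ε` on
`{u ∈ U : ρ(u)^{1-m}‖F(u)‖ ≤ δ}` (with `m ≥ 1`), then there is `C₀ > 0` such that on the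
same set (off the origin) the Kuo pseudo-distance satisfies
`min_j ‖N(F,j,u)‖ ≥ C₀·ρ(u)^{m-1} ≥ C₀·‖x‖^{m-1}`. -/
theorem kuoDist_ge_of_ND {n l p : ℕ}
    (F : EuclideanSpace ℝ (Fin n) × EuclideanSpace ℝ (Fin l) → EuclideanSpace ℝ (Fin p))
    (hF : ContDiff ℝ 1 F) (m : ℝ) (hm : 1 ≤ m)
    (ε δ : ℝ) (hε : 0 < ε) (hδ : 0 < δ)
    (U : Set (EuclideanSpace ℝ (Fin n) × EuclideanSpace ℝ (Fin l))) (hU : U ∈ nhds 0)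
    (hND : ∀ u ∈ U, rho u ^ (1 - m) * ‖F u‖ ≤ δ →
      ε ≤ kappa (Matrix.of fun i j =>
        rho u ^ (1 - m) * fderiv ℝ F u (EuclideanSpace.single j 1, 0) i)) :
    ∃ C₀ > (0 : ℝ), ∀ u ∈ U, rho u ^ (1 - m) * ‖F u‖ ≤ δ → u ≠ 0 →
      C₀ * rho u ^ (m - 1) ≤ ⨅ j : Fin p, ‖NK F j u‖ ∧
      C₀ * ‖u.1‖ ^ (m - 1) ≤ ⨅ j : Fin p, ‖NK F j u‖ :=
  kuoDist_ge_of_ND_general F m hm ε δ hε U hND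

end
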